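/- arXiv:1710.00494 — 3 statements merged into one kernel-verified Lean document; each statement's English description precedes it below -/
import Mathlib

section
/- (Lidskii–Wielandt inequality, ℓ² form) For n×n real symmetric matrices X and Y, (∑_{i=1}^n (λ_i(X) − λ_i(Y))²)^{1/2} ≤ ‖X − Y‖_F, where λ_1 ≥ ⋯ ≥ λ_n denote eigenvalues in decreasing order counting multiplicities and ‖·‖_F is the Frobenius norm. -/
open Matrix BigOperators

noncomputable section

/-- Loewner order: `A ≤ B` iff `B - A` is positive semidefinite. -/
def loewnerLE {m : ℕ} (A B : Matrix (Fin m) (Fin m) ℝ) : Prop := (B - A).PosSemidef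

/-- `M(B/A) = inf {α > 0 : B ≤ α A}` (Loewner order). -/
noncomputable def Mratio {m : ℕ} (A B : Matrix (Fin m) (Fin m) ℝ) : ℝ :=
  sInf {α : ℝ | 0 < α ∧ loewnerLE B (α • A)}

/-- The Thompson metric `d_T(A,B) = max (log M(B/A)) (log M(A/B))`. -/
noncomputable def thompson {m : ℕ} (A B : Matrix (Fin m) (Fin m) ℝ) : ℝ :=
  max (Real.log (Mratio A B)) (Real.log (Mratio B A))

/-- Eigenvalues of a (Hermitian) matrix arranged in decreasing order, counting
multiplicities; junk value `0` if the matrix is not Hermitian. -/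
noncomputable def sortedEigs {m : ℕ} (A : Matrix (Fin m) (Fin m) ℝ) : Fin m → ℝ :=
  if hA : A.IsHermitian then fun i => hA.eigenvalues (Tuple.sort hA.eigenvalues i.rev)
  else fun _ => 0

/-- Functional calculus: apply `f : ℝ → ℝ` to a symmetric matrix via the spectral
decomposition; junk value `0` if the matrix is not Hermitian. -/
noncomputable def matFun {m : ℕ} (f : ℝ → ℝ) (A : Matrix (Fin m) (Fin m) ℝ) :
    Matrix (Fin m) (Fin m) ℝ :=
  if hA : A.IsHermitian then hA.cfc f else 0

/-- Matrix logarithm via the spectral decomposition. -/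
noncomputable def matLog {m : ℕ} (A : Matrix (Fin m) (Fin m) ℝ) : Matrix (Fin m) (Fin m) ℝ :=
  matFun Real.log A

/-- Matrix exponential via the spectral decomposition. -/
noncomputable def matExp {m : ℕ} (A : Matrix (Fin m) (Fin m) ℝ) : Matrix (Fin m) (Fin m) ℝ :=
  matFun Real.exp A

/-- Positive-definite square root. -/
noncomputable def pdSqrt {m : ℕ} (A : Matrix (Fin m) (Fin m) ℝ) : Matrix (Fin m) (Fin m) ℝ :=
  matFun Real.sqrt A

/-- The inverse square root `A^{-1/2}`. -/
noncomputable def pdInvSqrt {m : ℕ} (A : Matrix (Fin m) (Fin m) ℝ) : Matrix (Fin m) (Fin m) ℝ :=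
  matFun (fun x => (Real.sqrt x)⁻¹) A

/-- The real power `A^r` of a positive definite matrix via the spectral decomposition. -/
noncomputable def matPow {m : ℕ} (r : ℝ) (A : Matrix (Fin m) (Fin m) ℝ) :
    Matrix (Fin m) (Fin m) ℝ :=
  matFun (fun x => x ^ r) A

/-- Frobenius norm `(tr X²)^{1/2}` of a real symmetric matrix. -/
noncomputable def frob {m : ℕ} (X : Matrix (Fin m) (Fin m) ℝ) : ℝ :=
  Real.sqrt ((X * X).trace)

/-- Riemannian trace distance `δ(A,B) = ‖log (A^{-1/2} B A^{-1/2})‖_F`. -/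
noncomputable def riemDist {m : ℕ} (A B : Matrix (Fin m) (Fin m) ℝ) : ℝ :=
  frob (matLog (pdInvSqrt A * B * pdInvSqrt A))

/-- The standard symplectic form matrix `J = [[0, I], [-I, 0]]` of size `(n+n) × (n+n)`. -/
noncomputable def Jmat (n : ℕ) : Matrix (Fin (n + n)) (Fin (n + n)) ℝ :=
  Matrix.reindex finSumFinEquiv finSumFinEquiv (Matrix.fromBlocks 0 1 (-1) 0)

/-- The matrix `A^{1/2} Jᵀ A J A^{1/2}`, whose eigenvalues are the squares of the
(extended) symplectic eigenvalues of `A`. -/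
noncomputable def sympProd {n : ℕ} (A : Matrix (Fin (n + n)) (Fin (n + n)) ℝ) :
    Matrix (Fin (n + n)) (Fin (n + n)) ℝ :=
  pdSqrt A * (Jmat n)ᵀ * A * Jmat n * pdSqrt A

/-- The `t`-weighted geometric mean `A #_t B = A^{1/2} (A^{-1/2} B A^{-1/2})^t A^{1/2}`. -/
noncomputable def gmean {m : ℕ} (t : ℝ) (A B : Matrix (Fin m) (Fin m) ℝ) :
    Matrix (Fin m) (Fin m) ℝ :=
  pdSqrt A * matPow t (pdInvSqrt A * B * pdInvSqrt A) * pdSqrt A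

/-!
The cross term is controlled by von Neumann's trace inequality
`tr (X Y) ≤ ∑ i, λ_i(X) λ_i(Y)`, after which `‖X - Y‖_F² = tr X² - 2 tr (X Y) + tr Y²` and
`tr X² = ∑ i, λ_i(X)²` give the claim. For the trace inequality, diagonalise
`X = U diag(a) Uᵀ` and `Y = V diag(b) Vᵀ` with `a`, `b` sorted decreasingly:
then `tr (X Y) = ∑ k l, a k b l S k l`, where `S` is the entrywise square of the orthogonal
matrix `Uᵀ V` and hence doubly stochastic. The right-hand side is linear in `S`, so by
Birkhoff's theorem it is maximal at a permutation matrix, where the rearrangement inequality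
bounds it by `∑ i, a i b i`.
-/

namespace Matrix

section DoublyStochastic

variable {R ι : Type*} [Field R] [LinearOrder R] [IsStrictOrderedRing R]
  [Fintype ι] [DecidableEq ι]

theorem sum_sum_mul_mul_le_sum_mul_of_mem_doublyStochastic {S : Matrix ι ι R}
    (hS : S ∈ doublyStochastic R ι) {a b : ι → R} (hab : Monovary a b) :
    ∑ k, ∑ l, a k * b l * S k l ≤ ∑ i, a i * b i := by
  let f : Matrix ι ι R →ₗ[R] R :=
    { toFun := fun M => ∑ k, ∑ l, a k * b l * M k l
      map_add' := fun M N => by simp [mul_add, Finset.sum_add_distrib]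
      map_smul' := fun c M => by simp [Finset.mul_sum, mul_left_comm] }
  have hS' : S ∈ convexHull R {σ.permMatrix R | σ : Equiv.Perm ι} := by
    rwa [← doublyStochastic_eq_convexHull_permMatrix]
  obtain ⟨_, ⟨σ, rfl⟩, hσ⟩ := (f.convexOn convex_univ).exists_ge_of_mem_convexHull (by simp) hS'
  calc ∑ k, ∑ l, a k * b l * S k l = f S := rfl
    _ ≤ f (σ.permMatrix R) := hσ
    _ = ∑ k, a k * b (σ k) := by
        refine Finset.sum_congr rfl fun k _ => ?_
        simp [Equiv.Perm.permMatrix, PEquiv.toMatrix_apply, eq_comm]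
    _ ≤ ∑ i, a i * b i := hab.sum_mul_comp_perm_le_sum_mul

end DoublyStochastic

variable {ι : Type*} [Fintype ι]

theorem trace_sub_mul_self_sub {R : Type*} [CommRing R] (A B : Matrix ι ι R) :
    ((A - B) * (A - B)).trace = (A * A).trace - 2 * (A * B).trace + (B * B).trace := by
  rw [show (A - B) * (A - B) = A * A - A * B - B * A + B * B by noncomm_ring, trace_add,
    trace_sub, trace_sub, trace_mul_comm B A]
  ring

variable [DecidableEq ι]

theorem of_sq_mem_doublyStochastic {W : Matrix ι ι ℝ} (hW : W ∈ unitaryGroup ι ℝ) :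
    of (fun k l => W k l ^ 2) ∈ doublyStochastic ℝ ι := by
  have hrow := mem_unitaryGroup_iff.mp hW
  have hcol := mem_unitaryGroup_iff'.mp hW
  refine mem_doublyStochastic_iff_sum.mpr ⟨fun _ _ => sq_nonneg _, fun k => ?_, fun l => ?_⟩
  · simpa [mul_apply, sq] using congrFun (congrFun hrow k) k
  · simpa [mul_apply, sq] using congrFun (congrFun hcol l) l

theorem trace_diagonal_mul_mul_diagonal_mul_conjTranspose (d e : ι → ℝ) (W : Matrix ι ι ℝ) :
    (diagonal d * W * diagonal e * Wᴴ).trace = ∑ k, ∑ l, d k * e l * W k l ^ 2 := by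
  simp only [trace, diag_apply, mul_apply, conjTranspose_apply, star_trivial, diagonal_apply,
    ite_mul, zero_mul, mul_ite, mul_zero, Finset.sum_ite_eq, Finset.sum_ite_eq',
    Finset.mem_univ, if_true]
  exact Finset.sum_congr rfl fun k _ => Finset.sum_congr rfl fun l _ => by ring

theorem trace_conj_diagonal {U : Matrix ι ι ℝ} (hU : U ∈ unitaryGroup ι ℝ) (d : ι → ℝ) :
    (U * diagonal d * Uᴴ).trace = ∑ i, d i := by
  rw [trace_mul_cycle, ← star_eq_conjTranspose, mem_unitaryGroup_iff'.mp hU, one_mul,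
    trace_diagonal]

theorem trace_conj_diagonal_mul_conj_diagonal (U V : Matrix ι ι ℝ) (d e : ι → ℝ) :
    (U * diagonal d * Uᴴ * (V * diagonal e * Vᴴ)).trace =
      ∑ k, ∑ l, d k * e l * (Uᴴ * V) k l ^ 2 := by
  rw [← trace_diagonal_mul_mul_diagonal_mul_conjTranspose, conjTranspose_mul,
    conjTranspose_conjTranspose,
    show U * diagonal d * Uᴴ * (V * diagonal e * Vᴴ) = U * (diagonal d * Uᴴ * V * diagonal e * Vᴴ)
      by noncomm_ring, trace_mul_comm]
  noncomm_ring

theorem trace_conj_diagonal_mul_conj_diagonal_le {U V : Matrix ι ι ℝ}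
    (hU : U ∈ unitaryGroup ι ℝ) (hV : V ∈ unitaryGroup ι ℝ) {a b : ι → ℝ} (hab : Monovary a b) :
    (U * diagonal a * Uᴴ * (V * diagonal b * Vᴴ)).trace ≤ ∑ i, a i * b i := by
  rw [trace_conj_diagonal_mul_conj_diagonal]
  have hW : Uᴴ * V ∈ unitaryGroup ι ℝ := mul_mem (Unitary.star_mem hU) hV
  exact sum_sum_mul_mul_le_sum_mul_of_mem_doublyStochastic (of_sq_mem_doublyStochastic hW) hab

end Matrix

open Matrix

section SortedEigs

variable {n : ℕ} {A B : Matrix (Fin n) (Fin n) ℝ}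

theorem sortedEigs_eq_comp (hA : A.IsHermitian) :
    sortedEigs A = hA.eigenvalues ∘ (Fin.revPerm.trans (Tuple.sort hA.eigenvalues)) := by
  rw [sortedEigs, dif_pos hA]
  rfl

theorem sortedEigs_antitone (A : Matrix (Fin n) (Fin n) ℝ) : Antitone (sortedEigs A) := by
  by_cases hA : A.IsHermitian
  · rw [sortedEigs_eq_comp hA]
    exact fun i j hij => Tuple.monotone_sort hA.eigenvalues (Fin.rev_le_rev.2 hij)
  · rw [sortedEigs, dif_neg hA]
    exact antitone_const

theorem exists_unitary_eq_conj_diagonal_sortedEigs (hA : A.IsHermitian) :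
    ∃ U ∈ unitaryGroup (Fin n) ℝ, A = U * diagonal (sortedEigs A) * Uᴴ := by
  set π := Fin.revPerm.trans (Tuple.sort hA.eigenvalues)
  set U : Matrix (Fin n) (Fin n) ℝ := ↑hA.eigenvectorUnitary
  have hU : U * Uᴴ = 1 := mem_unitaryGroup_iff.mp hA.eigenvectorUnitary.2
  refine ⟨U.submatrix id π, mem_unitaryGroup_iff.mpr ?_, ?_⟩
  · rw [star_eq_conjTranspose, conjTranspose_submatrix, submatrix_mul_equiv, hU]
    rfl
  · rw [sortedEigs_eq_comp hA, ← submatrix_diagonal_equiv, conjTranspose_submatrix,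
      submatrix_mul_equiv, submatrix_mul_equiv (e₂ := π)]
    simpa [star_eq_conjTranspose] using hA.spectral_theorem

theorem trace_mul_le_sum_sortedEigs_mul (hA : A.IsHermitian) (hB : B.IsHermitian) :
    (A * B).trace ≤ ∑ i, sortedEigs A i * sortedEigs B i := by
  obtain ⟨U, hU, hAU⟩ := exists_unitary_eq_conj_diagonal_sortedEigs hA
  obtain ⟨V, hV, hBV⟩ := exists_unitary_eq_conj_diagonal_sortedEigs hB
  have hmono : Monovary (sortedEigs A) (sortedEigs B) := fun i j hij =>
    sortedEigs_antitone A ((sortedEigs_antitone B).reflect_lt hij).le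
  have hdiag := trace_conj_diagonal_mul_conj_diagonal_le hU hV hmono
  rwa [← hAU, ← hBV] at hdiag

theorem trace_mul_self_eq_sum_sortedEigs_sq (hA : A.IsHermitian) :
    (A * A).trace = ∑ i, sortedEigs A i ^ 2 := by
  obtain ⟨U, hU, hAU⟩ := exists_unitary_eq_conj_diagonal_sortedEigs hA
  have hUU : Uᴴ * U = 1 := mem_unitaryGroup_iff'.mp hU
  calc (A * A).trace
        = (U * (diagonal (sortedEigs A) * (Uᴴ * U) * diagonal (sortedEigs A)) * Uᴴ).trace := by
        conv_lhs => rw [hAU]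
        noncomm_ring
    _ = ∑ i, sortedEigs A i ^ 2 := by
        rw [hUU, mul_one, diagonal_mul_diagonal, trace_conj_diagonal hU]
        simp only [sq]

end SortedEigs

/-- Lidskii–Wielandt, ℓ² form:
`(∑ i (λ_i(X) − λ_i(Y))²)^{1/2} ≤ ‖X − Y‖_F` for real symmetric `X, Y`. -/
theorem lidskii_wielandt_l2
    (n : ℕ) (X Y : Matrix (Fin n) (Fin n) ℝ)
    (hX : X.IsHermitian) (hY : Y.IsHermitian) :
    Real.sqrt (∑ i : Fin n, (sortedEigs X i - sortedEigs Y i) ^ 2) ≤ frob (X - Y) := by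
  refine Real.sqrt_le_sqrt ?_
  rw [trace_sub_mul_self_sub, trace_mul_self_eq_sum_sortedEigs_sq hX,
    trace_mul_self_eq_sum_sortedEigs_sq hY]
  have hcross := trace_mul_le_sum_sortedEigs_mul hX hY
  simp only [sub_sq, Finset.sum_add_distrib, Finset.sum_sub_distrib, mul_assoc, ← Finset.mul_sum]
  linarith
end
end

section
/- The extended symplectic eigenvalue map is monotone: for A, B ∈ P_{2n} with A ≤ B in the Loewner order, λ_i(A^{1/2} Jᵀ A J A^{1/2}) ≤ λ_i(B^{1/2} Jᵀ B J B^{1/2}) for every i = 1, …, 2n, where λ_1 ≥ ⋯ ≥ λ_{2n} denote eigenvalues in decreasing order. -/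
/-!
Write `C_X = Jᵀ X J`. The eigenvalues of `X^{1/2} Y X^{1/2}` are those of `X Y`, hence symmetric
in `X, Y ≥ 0`, and by Weyl's monotonicity principle they increase with `Y` in the Loewner order.
Therefore
`λ(A^{1/2} C_A A^{1/2}) ≤ λ(A^{1/2} C_B A^{1/2}) = λ(C_B^{1/2} A C_B^{1/2})
  ≤ λ(C_B^{1/2} B C_B^{1/2}) = λ(B^{1/2} C_B B^{1/2})`.
-/

open Matrix BigOperators

noncomputable section

open Module Submodule
open scoped RealInnerProductSpace

namespace Matrix.IsHermitian

variable {n : Type*} [Fintype n] [DecidableEq n] {M : Matrix n n ℝ} (hM : M.IsHermitian)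

lemma toEuclideanLin_eigenvectorBasis (j : n) :
    toEuclideanLin M (hM.eigenvectorBasis j) = hM.eigenvalues j • hM.eigenvectorBasis j := by
  apply (WithLp.equiv 2 (n → ℝ)).injective
  simpa using hM.mulVec_eigenvectorBasis j

lemma inner_toEuclideanLin_self_eq_sum (x : EuclideanSpace ℝ n) :
    ⟪x, toEuclideanLin M x⟫ = ∑ j, hM.eigenvalues j * ⟪hM.eigenvectorBasis j, x⟫ ^ 2 := by
  rw [← hM.eigenvectorBasis.sum_inner_mul_inner x (toEuclideanLin M x)]
  refine Finset.sum_congr rfl fun j _ => ?_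
  rw [← (isSymmetric_toEuclideanLin_iff.mpr hM) (hM.eigenvectorBasis j) x,
    hM.toEuclideanLin_eigenvectorBasis, real_inner_smul_left, real_inner_comm x]
  ring

lemma inner_eigenvectorBasis_eq_zero_of_mem_span {s : Set n} {j : n} (hj : j ∉ s)
    {x : EuclideanSpace ℝ n} (hx : x ∈ span ℝ (hM.eigenvectorBasis '' s)) :
    ⟪hM.eigenvectorBasis j, x⟫ = 0 := by
  obtain ⟨l, hl, rfl⟩ := (Finsupp.mem_span_image_iff_linearCombination ℝ).mp hx
  rw [real_inner_comm]
  exact hM.eigenvectorBasis.orthonormal.inner_finsupp_eq_zero hj hl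

lemma mul_norm_sq_le_inner_toEuclideanLin {s : Set n} {c : ℝ}
    (hc : ∀ j ∈ s, c ≤ hM.eigenvalues j) {x : EuclideanSpace ℝ n}
    (hx : x ∈ span ℝ (hM.eigenvectorBasis '' s)) :
    c * ‖x‖ ^ 2 ≤ ⟪x, toEuclideanLin M x⟫ := by
  rw [hM.inner_toEuclideanLin_self_eq_sum, ← hM.eigenvectorBasis.sum_sq_inner_right,
    Finset.mul_sum]
  refine Finset.sum_le_sum fun j _ => ?_
  by_cases hj : j ∈ s
  · exact mul_le_mul_of_nonneg_right (hc j hj) (sq_nonneg _)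
  · simp [hM.inner_eigenvectorBasis_eq_zero_of_mem_span hj hx]

lemma inner_toEuclideanLin_le_mul_norm_sq {s : Set n} {c : ℝ}
    (hc : ∀ j ∈ s, hM.eigenvalues j ≤ c) {x : EuclideanSpace ℝ n}
    (hx : x ∈ span ℝ (hM.eigenvectorBasis '' s)) :
    ⟪x, toEuclideanLin M x⟫ ≤ c * ‖x‖ ^ 2 := by
  rw [hM.inner_toEuclideanLin_self_eq_sum, ← hM.eigenvectorBasis.sum_sq_inner_right,
    Finset.mul_sum]
  refine Finset.sum_le_sum fun j _ => ?_
  by_cases hj : j ∈ s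
  · exact mul_le_mul_of_nonneg_right (hc j hj) (sq_nonneg _)
  · simp [hM.inner_eigenvectorBasis_eq_zero_of_mem_span hj hx]

lemma finrank_span_eigenvectorBasis_image (s : Finset n) :
    finrank ℝ (span ℝ (hM.eigenvectorBasis '' s)) = s.card := by
  have hli : LinearIndependent ℝ fun j : (s : Set n) => hM.eigenvectorBasis j :=
    hM.eigenvectorBasis.orthonormal.linearIndependent.comp _ Subtype.val_injective
  rw [Set.image_eq_range, finrank_span_eq_card hli]
  simp

end Matrix.IsHermitian

lemma Matrix.PosSemidef.inner_toEuclideanLin_le {n : Type*} [Fintype n] [DecidableEq n]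
    {M N : Matrix n n ℝ} (h : (N - M).PosSemidef) (x : EuclideanSpace ℝ n) :
    ⟪x, toEuclideanLin M x⟫ ≤ ⟪x, toEuclideanLin N x⟫ := by
  have := (isPositive_toEuclideanLin_iff.mpr h).inner_nonneg_right x
  rw [map_sub, LinearMap.sub_apply, inner_sub_right] at this
  linarith

lemma Matrix.IsHermitian.mul_mul_self {n : Type*} [Fintype n] {S Q : Matrix n n ℝ}
    (hS : S.IsHermitian) (hQ : Q.IsHermitian) : (S * Q * S).IsHermitian := by
  simpa only [hS.eq] using isHermitian_mul_mul_conjTranspose S hQ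

lemma Submodule.exists_mem_inf_ne_zero_of_finrank_add_gt {K V : Type*} [DivisionRing K]
    [AddCommGroup V] [Module K V] [FiniteDimensional K V] {U W : Submodule K V}
    (h : finrank K V < finrank K U + finrank K W) : ∃ x ∈ U ⊓ W, x ≠ 0 := by
  rw [← Submodule.ne_bot_iff]
  intro hbot
  have := Submodule.finrank_sup_add_finrank_inf_eq U W
  rw [hbot, finrank_bot] at this
  have := Submodule.finrank_le (U ⊔ W)
  omega

theorem Matrix.IsHermitian.eigenvalues_sort_le {m : ℕ} {M N : Matrix (Fin m) (Fin m) ℝ}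
    (hM : M.IsHermitian) (hN : N.IsHermitian) (hMN : (N - M).PosSemidef) (k : Fin m) :
    hM.eigenvalues (Tuple.sort hM.eigenvalues k) ≤
      hN.eigenvalues (Tuple.sort hN.eigenvalues k) := by
  set σ := Tuple.sort hM.eigenvalues
  set τ := Tuple.sort hN.eigenvalues
  set U := span ℝ (hM.eigenvectorBasis '' ((Finset.Ici k).image σ : Finset (Fin m)))
  set W := span ℝ (hN.eigenvectorBasis '' ((Finset.Iic k).image τ : Finset (Fin m)))
  have hdim : finrank ℝ (EuclideanSpace ℝ (Fin m)) < finrank ℝ U + finrank ℝ W := by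
    rw [finrank_euclideanSpace_fin, hM.finrank_span_eigenvectorBasis_image,
      hN.finrank_span_eigenvectorBasis_image, Finset.card_image_of_injective _ σ.injective,
      Finset.card_image_of_injective _ τ.injective, Fin.card_Ici, Fin.card_Iic]
    omega
  -- Courant–Fischer: `U` and `W` have dimensions `m - k` and `k + 1`, so they meet.
  obtain ⟨x, ⟨hxU, hxW⟩, hx⟩ := exists_mem_inf_ne_zero_of_finrank_add_gt hdim
  have hU : hM.eigenvalues (σ k) * ‖x‖ ^ 2 ≤ ⟪x, toEuclideanLin M x⟫ := by
    refine hM.mul_norm_sq_le_inner_toEuclideanLin ?_ hxU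
    rw [Finset.coe_image]
    exact Set.forall_mem_image.2 fun l hl =>
      Tuple.monotone_sort hM.eigenvalues (Finset.mem_Ici.1 hl)
  have hW : ⟪x, toEuclideanLin N x⟫ ≤ hN.eigenvalues (τ k) * ‖x‖ ^ 2 := by
    refine hN.inner_toEuclideanLin_le_mul_norm_sq ?_ hxW
    rw [Finset.coe_image]
    exact Set.forall_mem_image.2 fun l hl =>
      Tuple.monotone_sort hN.eigenvalues (Finset.mem_Iic.1 hl)
  have hUW := hMN.inner_toEuclideanLin_le x
  exact le_of_mul_le_mul_right (hU.trans (hUW.trans hW)) (by positivity)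

lemma sortedEigs_of_isHermitian {m : ℕ} {M : Matrix (Fin m) (Fin m) ℝ} (hM : M.IsHermitian) :
    sortedEigs M = fun i => hM.eigenvalues (Tuple.sort hM.eigenvalues i.rev) :=
  dif_pos hM

lemma sortedEigs_le_of_posSemidef_sub {m : ℕ} {M N : Matrix (Fin m) (Fin m) ℝ}
    (hM : M.IsHermitian) (hMN : (N - M).PosSemidef) (i : Fin m) :
    sortedEigs M i ≤ sortedEigs N i := by
  have hN : N.IsHermitian := by simpa using hM.add hMN.isHermitian
  rw [sortedEigs_of_isHermitian hM, sortedEigs_of_isHermitian hN]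
  exact hM.eigenvalues_sort_le hN hMN i.rev

lemma sortedEigs_eq_of_charpoly_eq {m : ℕ} {M N : Matrix (Fin m) (Fin m) ℝ}
    (hM : M.IsHermitian) (hN : N.IsHermitian) (h : M.charpoly = N.charpoly) :
    sortedEigs M = sortedEigs N := by
  rw [sortedEigs_of_isHermitian hM, sortedEigs_of_isHermitian hN,
    (hM.eigenvalues_eq_eigenvalues_iff hN).2 h]

lemma isHermitian_pdSqrt {m : ℕ} (A : Matrix (Fin m) (Fin m) ℝ) : (pdSqrt A).IsHermitian := by
  unfold pdSqrt matFun
  split_ifs with hA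
  · rw [← hA.cfc_eq]
    exact cfc_predicate Real.sqrt A
  · exact isHermitian_zero

open MatrixOrder in
lemma pdSqrt_mul_self {m : ℕ} {A : Matrix (Fin m) (Fin m) ℝ} (hA : A.PosSemidef) :
    pdSqrt A * pdSqrt A = A := by
  rw [pdSqrt, matFun, dif_pos hA.isHermitian, ← hA.isHermitian.cfc_eq,
    ← cfc_mul Real.sqrt Real.sqrt A]
  conv_rhs => rw [← cfc_id' ℝ A hA.isHermitian]
  exact cfc_congr fun x hx => Real.mul_self_sqrt (spectrum_nonneg_of_nonneg hA.nonneg hx)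

lemma sortedEigs_conj_le_of_posSemidef_sub {m : ℕ} {S Q Q' : Matrix (Fin m) (Fin m) ℝ}
    (hS : S.IsHermitian) (hQ : Q.IsHermitian) (hQQ' : (Q' - Q).PosSemidef) (i : Fin m) :
    sortedEigs (S * Q * S) i ≤ sortedEigs (S * Q' * S) i := by
  refine sortedEigs_le_of_posSemidef_sub (hS.mul_mul_self hQ) ?_ i
  rw [← Matrix.sub_mul, ← Matrix.mul_sub]
  simpa only [hS.eq] using hQQ'.mul_mul_conjTranspose_same S

lemma charpoly_pdSqrt_mul_mul_pdSqrt {m : ℕ} {P : Matrix (Fin m) (Fin m) ℝ} (hP : P.PosSemidef)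
    (Q : Matrix (Fin m) (Fin m) ℝ) : (pdSqrt P * Q * pdSqrt P).charpoly = (P * Q).charpoly := by
  rw [Matrix.mul_assoc, charpoly_mul_comm, Matrix.mul_assoc, pdSqrt_mul_self hP,
    charpoly_mul_comm]

lemma sortedEigs_pdSqrt_mul_mul_pdSqrt_comm {m : ℕ} {P Q : Matrix (Fin m) (Fin m) ℝ}
    (hP : P.PosSemidef) (hQ : Q.PosSemidef) :
    sortedEigs (pdSqrt P * Q * pdSqrt P) = sortedEigs (pdSqrt Q * P * pdSqrt Q) := by
  refine sortedEigs_eq_of_charpoly_eq ((isHermitian_pdSqrt P).mul_mul_self hQ.1)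
    ((isHermitian_pdSqrt Q).mul_mul_self hP.1) ?_
  rw [charpoly_pdSqrt_mul_mul_pdSqrt hP, charpoly_pdSqrt_mul_mul_pdSqrt hQ, charpoly_mul_comm]

theorem sortedEigs_pdSqrt_mul_conj_mul_pdSqrt_mono {m : ℕ} (T : Matrix (Fin m) (Fin m) ℝ)
    {A B : Matrix (Fin m) (Fin m) ℝ} (hA : A.PosSemidef) (hAB : (B - A).PosSemidef)
    (i : Fin m) :
    sortedEigs (pdSqrt A * (Tᵀ * A * T) * pdSqrt A) i ≤
      sortedEigs (pdSqrt B * (Tᵀ * B * T) * pdSqrt B) i := by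
  have hB : B.PosSemidef := by simpa using hA.add hAB
  rw [← conjTranspose_eq_transpose_of_trivial]
  have hCA : (Tᴴ * A * T).PosSemidef := hA.conjTranspose_mul_mul_same T
  have hCB : (Tᴴ * B * T).PosSemidef := hB.conjTranspose_mul_mul_same T
  have hCAB : (Tᴴ * B * T - Tᴴ * A * T).PosSemidef := by
    rw [← Matrix.sub_mul, ← Matrix.mul_sub]
    exact hAB.conjTranspose_mul_mul_same T
  calc sortedEigs (pdSqrt A * (Tᴴ * A * T) * pdSqrt A) i
      ≤ sortedEigs (pdSqrt A * (Tᴴ * B * T) * pdSqrt A) i :=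
        sortedEigs_conj_le_of_posSemidef_sub (isHermitian_pdSqrt A) hCA.1 hCAB i
    _ = sortedEigs (pdSqrt (Tᴴ * B * T) * A * pdSqrt (Tᴴ * B * T)) i := by
        rw [sortedEigs_pdSqrt_mul_mul_pdSqrt_comm hA hCB]
    _ ≤ sortedEigs (pdSqrt (Tᴴ * B * T) * B * pdSqrt (Tᴴ * B * T)) i :=
        sortedEigs_conj_le_of_posSemidef_sub (isHermitian_pdSqrt _) hA.1 hAB i
    _ = sortedEigs (pdSqrt B * (Tᴴ * B * T) * pdSqrt B) i := by
        rw [sortedEigs_pdSqrt_mul_mul_pdSqrt_comm hCB hB]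

theorem extended_symplectic_eigenvalues_monotone_general
    (n : ℕ) (A B : Matrix (Fin (n + n)) (Fin (n + n)) ℝ)
    (hA : A.PosDef) (hAB : (B - A).PosSemidef) :
    ∀ i : Fin (n + n), sortedEigs (sympProd A) i ≤ sortedEigs (sympProd B) i := fun i => by
  simpa only [sympProd, Matrix.mul_assoc] using
    sortedEigs_pdSqrt_mul_conj_mul_pdSqrt_mono (Jmat n) hA.posSemidef hAB i

/-- the extended symplectic eigenvalue map is monotone: `A ≤ B` (Loewner)
implies `λ_i(A^{1/2} Jᵀ A J A^{1/2}) ≤ λ_i(B^{1/2} Jᵀ B J B^{1/2})` for all `i`. -/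
theorem extended_symplectic_eigenvalues_monotone
    (n : ℕ) (A B : Matrix (Fin (n + n)) (Fin (n + n)) ℝ)
    (hA : A.PosDef) (hB : B.PosDef) (hAB : (B - A).PosSemidef) :
    ∀ i : Fin (n + n), sortedEigs (sympProd A) i ≤ sortedEigs (sympProd B) i :=
  extended_symplectic_eigenvalues_monotone_general n A B hA hAB
end
end

section
/- Let (Ω, P) be a probability space and φ : Ω → P_n a measurable map such that ω ↦ log φ(ω) is Bochner integrable into the real symmetric matrices. Then λ(exp ∫_Ω log φ dP) ≺_log exp ∫_Ω log λ(φ(ω)) dP: for every k = 1, …, n, ∏_{i=1}^k λ_i(exp(∫_Ω log φ(ω) dP(ω))) ≤ ∏_{i=1}^k exp(∫_Ω log λ_i(φ(ω)) dP(ω)), with equality for k = n. -/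
/-!
The sum of the `k` largest eigenvalues of a symmetric operator `T` equals Ky Fan's supremum of
`∑ᵢ ⟪vᵢ, T vᵢ⟫` over orthonormal `k`-frames `v`. As a supremum of linear functionals of `T` it is
Lipschitz and satisfies Jensen's inequality, so the top-`k` eigenvalue sum of `∫ log φ` is at most
the integral of the top-`k` eigenvalue sums of `log φ`; for `k = n` both sides are traces and
agree. Monotone functions preserve the decreasing order of eigenvalues, so `λ(exp B) = exp λ(B)`
and `λ(log φ) = log λ(φ)`, and exponentiating gives the log-majorization. Writing each eigenvalue
as a difference of two Ky Fan sums also makes it an integrable function of `ω`.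
-/

open Matrix BigOperators

noncomputable section

open MeasureTheory

attribute [local instance] Matrix.normedAddCommGroup Matrix.normedSpace

open Finset
open scoped RealInnerProductSpace

theorem Fin.sum_filter_val_lt {M : Type*} [AddCommMonoid M] {n k : ℕ} (hk : k ≤ n)
    (f : Fin n → M) :
    ∑ j ∈ univ.filter (fun j : Fin n => j.val < k), f j = ∑ i : Fin k, f (i.castLE hk) := by
  have h : univ.filter (fun j : Fin n => j.val < k) = univ.map (Fin.castLEEmb hk) := by
    ext j
    simp only [mem_filter, mem_univ, true_and, mem_map, Fin.castLEEmb_apply]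
    exact ⟨fun hj => ⟨⟨j, hj⟩, rfl⟩, by rintro ⟨i, rfl⟩; exact i.isLt⟩
  rw [h, sum_map]
  rfl

theorem Fin.sum_filter_val_lt_succ {M : Type*} [AddCommMonoid M] {n : ℕ} (f : Fin n → M)
    (i : Fin n) :
    ∑ j ∈ univ.filter (fun j : Fin n => j.val < i.val + 1), f j
      = f i + ∑ j ∈ univ.filter (fun j : Fin n => j.val < i.val), f j := by
  rw [Fin.sum_filter_val_lt i.isLt, Fin.sum_filter_val_lt i.isLt.le, Fin.sum_univ_castSucc,
    add_comm]
  rfl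

theorem Antitone.sum_mul_le_sum_filter_val_lt {n k : ℕ} {d c : Fin n → ℝ} (hd : Antitone d)
    (hc₀ : ∀ j, 0 ≤ c j) (hc₁ : ∀ j, c j ≤ 1) (hk : k ≤ n) (hc : ∑ j, c j = k) :
    ∑ j, d j * c j ≤ ∑ j ∈ univ.filter (fun j : Fin n => j.val < k), d j := by
  obtain _ | n := n
  · simp
  set t := d ⟨min k n, by omega⟩
  set e : Fin (n + 1) → ℝ := fun j => if j.val < k then 1 else 0
  -- `t` separates the values of `d` below the cut `k` from those above it
  have hterm : ∀ j, (d j - t) * (c j - e j) ≤ 0 := by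
    intro j
    by_cases hj : j.val < k
    · refine mul_nonpos_of_nonneg_of_nonpos (sub_nonneg.2 (hd ?_)) ?_
      · simp only [Fin.le_def]; omega
      · simp only [e, if_pos hj]; linarith [hc₁ j]
    · refine mul_nonpos_of_nonpos_of_nonneg (sub_nonpos.2 (hd ?_)) ?_
      · simp only [Fin.le_def]; omega
      · simp only [e, if_neg hj]; linarith [hc₀ j]
  have he : ∑ j, e j = k := by
    simp [e, sum_boole, Fin.card_filter_val_lt, hk]
  have hfilter : ∑ j ∈ univ.filter (fun j : Fin (n + 1) => j.val < k), d j = ∑ j, d j * e j := by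
    simp [e, mul_ite, sum_ite]
  calc ∑ j, d j * c j
      = ∑ j, (d j - t) * (c j - e j) + ∑ j, d j * e j + t * (∑ j, c j - ∑ j, e j) := by
        simp only [mul_sub, sub_mul, sum_sub_distrib, mul_sum]; ring
    _ ≤ ∑ j ∈ univ.filter (fun j : Fin (n + 1) => j.val < k), d j := by
        rw [hc, he, sub_self, mul_zero, add_zero, hfilter]
        linarith [sum_nonpos fun j (_ : j ∈ univ) => hterm j]

theorem List.ofFn_eq_sort_of_antitone {n : ℕ} {d : Fin n → ℝ} (hd : Antitone d)
    {s : Multiset ℝ} (hs : univ.val.map d = s) : List.ofFn d = s.sort (· ≥ ·) := by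
  rw [← hs, Fin.univ_val_map, Multiset.coe_sort, List.mergeSort_of_pairwise]
  simp_rw [decide_eq_true_eq, ← List.sortedGE_iff_pairwise]
  exact hd.sortedGE_ofFn

namespace LinearMap.IsSymmetric

variable {E : Type*} [NormedAddCommGroup E] [InnerProductSpace ℝ E] [FiniteDimensional ℝ E]
  {T : E →ₗ[ℝ] E} {n : ℕ}

theorem inner_apply_self_eq_sum (hT : T.IsSymmetric) (hn : Module.finrank ℝ E = n) (x : E) :
    ⟪x, T x⟫ = ∑ j, hT.eigenvalues hn j * ⟪hT.eigenvectorBasis hn j, x⟫ ^ 2 := by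
  rw [← (hT.eigenvectorBasis hn).sum_inner_mul_inner x (T x)]
  refine sum_congr rfl fun j _ => ?_
  rw [← hT, hT.apply_eigenvectorBasis, RCLike.ofReal_real_eq_id, id_eq, real_inner_smul_left,
    real_inner_comm x]
  ring

/-- Ky Fan's inequality. -/
theorem sum_inner_apply_le (hT : T.IsSymmetric) (hn : Module.finrank ℝ E = n) {k : ℕ}
    (hk : k ≤ n) {v : Fin k → E} (hv : Orthonormal ℝ v) :
    ∑ i, ⟪v i, T (v i)⟫ ≤ ∑ j ∈ univ.filter (fun j : Fin n => j.val < k), hT.eigenvalues hn j := by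
  set b := hT.eigenvectorBasis hn
  -- the weight of the eigenvector `b j` in the frame: in `[0, 1]` by Bessel, of total mass `k`
  set c : Fin n → ℝ := fun j => ∑ i, ⟪b j, v i⟫ ^ 2
  have hc₁ : ∀ j, c j ≤ 1 := fun j => by
    simpa [c, real_inner_comm, b.orthonormal.1 j] using hv.sum_inner_products_le (b j) (s := univ)
  have hc : ∑ j, c j = k := by
    rw [sum_comm]
    simp [b.sum_sq_inner_right, hv.1]
  calc ∑ i, ⟪v i, T (v i)⟫ = ∑ j, hT.eigenvalues hn j * c j := by
        simp only [hT.inner_apply_self_eq_sum hn, c, mul_sum]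
        exact sum_comm
    _ ≤ _ := (hT.eigenvalues_antitone hn).sum_mul_le_sum_filter_val_lt
        (fun j => sum_nonneg fun i _ => sq_nonneg _) hc₁ hk hc

theorem sum_inner_apply_eigenvectorBasis (hT : T.IsSymmetric) (hn : Module.finrank ℝ E = n)
    {k : ℕ} (hk : k ≤ n) :
    ∑ i : Fin k, ⟪hT.eigenvectorBasis hn (i.castLE hk), T (hT.eigenvectorBasis hn (i.castLE hk))⟫
      = ∑ j ∈ univ.filter (fun j : Fin n => j.val < k), hT.eigenvalues hn j := by
  rw [Fin.sum_filter_val_lt hk]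
  refine sum_congr rfl fun i _ => ?_
  rw [hT.apply_eigenvectorBasis, RCLike.ofReal_real_eq_id, id_eq, real_inner_smul_right,
    real_inner_self_eq_norm_sq, (hT.eigenvectorBasis hn).orthonormal.1, one_pow, mul_one]

end LinearMap.IsSymmetric

section KyFanSum

variable {E : Type*} [NormedAddCommGroup E] [InnerProductSpace ℝ E]

def compressedTrace {k : ℕ} (v : Fin k → E) : (E →L[ℝ] E) →L[ℝ] ℝ :=
  ∑ i, (innerSL ℝ (v i)).comp (ContinuousLinearMap.apply ℝ E (v i))

theorem compressedTrace_apply {k : ℕ} (v : Fin k → E) (T : E →L[ℝ] E) :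
    compressedTrace v T = ∑ i, ⟪v i, T (v i)⟫ := by
  simp [compressedTrace]

theorem abs_compressedTrace_le {k : ℕ} {v : Fin k → E} (hv : Orthonormal ℝ v) (T : E →L[ℝ] E) :
    |compressedTrace v T| ≤ k * ‖T‖ := by
  rw [compressedTrace_apply]
  calc |∑ i, ⟪v i, T (v i)⟫| ≤ ∑ i : Fin k, ‖T‖ := by
        refine (abs_sum_le_sum_abs _ _).trans (sum_le_sum fun i _ => ?_)
        refine (abs_real_inner_le_norm _ _).trans ?_
        simpa [hv.1 i] using T.le_opNorm (v i)
    _ = k * ‖T‖ := by simp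

/-- Taken over all operators, not only symmetric ones, so that it is a Lipschitz function of `T`;
for symmetric `T` it is the sum of the `k` largest eigenvalues (`kyFanSum_eq_sum_eigenvalues`). -/
def kyFanSum (k : ℕ) (T : E →L[ℝ] E) : ℝ :=
  ⨆ v : {v : Fin k → E // Orthonormal ℝ v}, compressedTrace v.1 T

theorem le_kyFanSum {k : ℕ} {v : Fin k → E} (hv : Orthonormal ℝ v) (T : E →L[ℝ] E) :
    compressedTrace v T ≤ kyFanSum k T :=
  le_ciSup (f := fun v : {v : Fin k → E // Orthonormal ℝ v} => compressedTrace v.1 T)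
    ⟨k * ‖T‖, by rintro _ ⟨v, rfl⟩; exact (abs_le.1 (abs_compressedTrace_le v.2 T)).2⟩ ⟨v, hv⟩

variable [FiniteDimensional ℝ E]

theorem nonempty_orthonormal {k : ℕ} (hk : k ≤ Module.finrank ℝ E) :
    Nonempty {v : Fin k → E // Orthonormal ℝ v} :=
  ⟨⟨fun i => stdOrthonormalBasis ℝ E (i.castLE hk),
    (stdOrthonormalBasis ℝ E).orthonormal.comp _ (Fin.castLE_injective hk)⟩⟩

theorem kyFanSum_le_add {k : ℕ} (hk : k ≤ Module.finrank ℝ E) (T S : E →L[ℝ] E) :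
    kyFanSum k T ≤ kyFanSum k S + k * ‖T - S‖ := by
  have := nonempty_orthonormal (E := E) hk
  refine ciSup_le fun v => ?_
  have hTS : compressedTrace v.1 T = compressedTrace v.1 S + compressedTrace v.1 (T - S) := by
    rw [map_sub]; ring
  rw [hTS]
  exact add_le_add (le_kyFanSum v.2 S) (abs_le.1 (abs_compressedTrace_le v.2 _)).2

theorem lipschitzWith_kyFanSum {k : ℕ} (hk : k ≤ Module.finrank ℝ E) :
    LipschitzWith k (kyFanSum (E := E) k) :=
  LipschitzWith.of_le_add_mul _ fun T S => by
    simpa [dist_eq_norm] using kyFanSum_le_add hk T S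

theorem kyFanSum_zero {k : ℕ} (hk : k ≤ Module.finrank ℝ E) : kyFanSum (E := E) k 0 = 0 := by
  have := nonempty_orthonormal (E := E) hk
  simp [kyFanSum]

theorem kyFanSum_eq_sum_eigenvalues {T : E →L[ℝ] E} (hT : (T : E →ₗ[ℝ] E).IsSymmetric) {n : ℕ}
    (hn : Module.finrank ℝ E = n) {k : ℕ} (hk : k ≤ n) :
    kyFanSum k T = ∑ j ∈ univ.filter (fun j : Fin n => j.val < k), hT.eigenvalues hn j := by
  have := nonempty_orthonormal (E := E) (hn ▸ hk)
  refine le_antisymm (ciSup_le fun v => ?_) ?_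
  · rw [compressedTrace_apply]
    exact hT.sum_inner_apply_le hn hk v.2
  · rw [← hT.sum_inner_apply_eigenvectorBasis hn hk]
    exact (compressedTrace_apply _ T).symm.trans_le
      (le_kyFanSum ((hT.eigenvectorBasis hn).orthonormal.comp _ (Fin.castLE_injective hk)) T)

variable {Ω : Type*} [MeasurableSpace Ω] {P : Measure Ω} {T : Ω → E →L[ℝ] E}

theorem integrable_kyFanSum {k : ℕ} (hk : k ≤ Module.finrank ℝ E) (hT : Integrable T P) :
    Integrable (fun ω => kyFanSum k (T ω)) P := by
  refine Integrable.mono' (hT.norm.const_mul k)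
    ((lipschitzWith_kyFanSum hk).continuous.comp_aestronglyMeasurable hT.1)
    (ae_of_all _ fun ω => ?_)
  simpa [kyFanSum_zero hk] using (lipschitzWith_kyFanSum hk).dist_le_mul (T ω) 0

theorem kyFanSum_integral_le {k : ℕ} (hk : k ≤ Module.finrank ℝ E) (hT : Integrable T P) :
    kyFanSum k (∫ ω, T ω ∂P) ≤ ∫ ω, kyFanSum k (T ω) ∂P := by
  have := nonempty_orthonormal (E := E) hk
  refine ciSup_le fun v => ?_
  rw [← (compressedTrace v.1).integral_comp_comm hT]
  exact integral_mono ((compressedTrace v.1).integrable_comp hT) (integrable_kyFanSum hk hT)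
    fun ω => le_kyFanSum v.2 (T ω)

end KyFanSum

namespace Matrix

variable {m : ℕ}

/-- `Matrix.toEuclideanCLM` as a continuous linear equivalence, so that it commutes with Bochner
integrals of matrices. -/
def toEuclideanCLE :
    Matrix (Fin m) (Fin m) ℝ ≃L[ℝ] (EuclideanSpace ℝ (Fin m) →L[ℝ] EuclideanSpace ℝ (Fin m)) :=
  (toEuclideanCLM : Matrix (Fin m) (Fin m) ℝ ≃⋆ₐ[ℝ] _).toAlgEquiv.toLinearEquiv
    |>.toContinuousLinearEquiv

theorem isHermitian_matFun (f : ℝ → ℝ) (A : Matrix (Fin m) (Fin m) ℝ) :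
    (matFun f A).IsHermitian := by
  rw [matFun]
  split_ifs with hA
  · rw [← hA.cfc_eq]
    exact cfc_predicate f A
  · exact isHermitian_zero

namespace IsHermitian

open Polynomial

variable {A : Matrix (Fin m) (Fin m) ℝ}

theorem sortedEigs_eq_comp (hA : A.IsHermitian) :
    ∃ σ : Equiv.Perm (Fin m), sortedEigs A = hA.eigenvalues ∘ σ :=
  ⟨Fin.revPerm.trans (Tuple.sort hA.eigenvalues), by rw [sortedEigs, dif_pos hA]; rfl⟩

theorem antitone_sortedEigs (hA : A.IsHermitian) : Antitone (sortedEigs A) := by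
  intro i j hij
  rw [sortedEigs, dif_pos hA]
  exact Tuple.monotone_sort hA.eigenvalues (Fin.rev_le_rev.2 hij)

theorem roots_charpoly (hA : A.IsHermitian) : A.charpoly.roots = univ.val.map hA.eigenvalues := by
  simpa using hA.roots_charpoly_eq_eigenvalues

theorem map_sortedEigs (hA : A.IsHermitian) : univ.val.map (sortedEigs A) = A.charpoly.roots := by
  obtain ⟨σ, hσ⟩ := hA.sortedEigs_eq_comp
  rw [hσ, ← Multiset.map_map, Multiset.map_univ_val_equiv, hA.roots_charpoly]

theorem sortedEigs_eq_of_antitone (hA : A.IsHermitian) {d : Fin m → ℝ} (hd : Antitone d)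
    (hs : univ.val.map d = A.charpoly.roots) : sortedEigs A = d :=
  List.ofFn_injective <|
    (List.ofFn_eq_sort_of_antitone hA.antitone_sortedEigs hA.map_sortedEigs).trans
      (List.ofFn_eq_sort_of_antitone hd hs).symm

theorem sortedEigs_matFun (hA : A.IsHermitian) {f : ℝ → ℝ} (hf : MonotoneOn f (spectrum ℝ A)) :
    sortedEigs (matFun f A) = f ∘ sortedEigs A := by
  have hspec : ∀ i, sortedEigs A i ∈ spectrum ℝ A := fun i => by
    obtain ⟨σ, hσ⟩ := hA.sortedEigs_eq_comp
    rw [hσ]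
    exact hA.eigenvalues_mem_spectrum_real _
  refine (isHermitian_matFun f A).sortedEigs_eq_of_antitone
    (fun i j hij => hf (hspec j) (hspec i) (hA.antitone_sortedEigs hij)) ?_
  rw [matFun, dif_pos hA, ← hA.cfc_eq, hA.charpoly_cfc_eq,
    roots_prod _ _ (prod_ne_zero_iff.2 fun i _ => X_sub_C_ne_zero _), ← Multiset.map_map,
    hA.map_sortedEigs, hA.roots_charpoly]
  simp [Function.comp_def]

theorem sortedEigs_matExp (hA : A.IsHermitian) : sortedEigs (matExp A) = Real.exp ∘ sortedEigs A :=
  hA.sortedEigs_matFun (Real.exp_monotone.monotoneOn _)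

theorem sortedEigs_eq_eigenvalues_toEuclideanLin (hA : A.IsHermitian) :
    sortedEigs A
      = (isSymmetric_toEuclideanLin_iff.mpr hA).eigenvalues finrank_euclideanSpace_fin := by
  refine hA.sortedEigs_eq_of_antitone (LinearMap.IsSymmetric.eigenvalues_antitone _ _) ?_
  have hchar : (toEuclideanLin A).charpoly = A.charpoly := by
    rw [toEuclideanLin_eq_toLin_orthonormal, charpoly_toLin]
  rw [← hchar, (isSymmetric_toEuclideanLin_iff.mpr hA).roots_charpoly_eq_eigenvalues
    finrank_euclideanSpace_fin]
  simp

theorem sum_sortedEigs (hA : A.IsHermitian) : ∑ i, sortedEigs A i = A.trace := by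
  obtain ⟨σ, hσ⟩ := hA.sortedEigs_eq_comp
  rw [hA.trace_eq_sum_eigenvalues, hσ]
  exact Equiv.sum_comp σ _

theorem sum_filter_sortedEigs_eq_kyFanSum (hA : A.IsHermitian) {k : ℕ} (hk : k ≤ m) :
    ∑ j ∈ univ.filter (fun j : Fin m => j.val < k), sortedEigs A j
      = kyFanSum k (toEuclideanCLE A) := by
  rw [hA.sortedEigs_eq_eigenvalues_toEuclideanLin,
    kyFanSum_eq_sum_eigenvalues (isSymmetric_toEuclideanLin_iff.mpr hA)
      finrank_euclideanSpace_fin hk]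
  rfl

theorem sortedEigs_eq_kyFanSum_sub (hA : A.IsHermitian) (i : Fin m) :
    sortedEigs A i
      = kyFanSum (i.val + 1) (toEuclideanCLE A) - kyFanSum i.val (toEuclideanCLE A) := by
  rw [← hA.sum_filter_sortedEigs_eq_kyFanSum i.isLt,
    ← hA.sum_filter_sortedEigs_eq_kyFanSum i.isLt.le, Fin.sum_filter_val_lt_succ,
    add_sub_cancel_right]

end IsHermitian

theorem PosDef.sortedEigs_matLog {A : Matrix (Fin m) (Fin m) ℝ} (hA : A.PosDef) (i : Fin m) :
    sortedEigs (matLog A) i = Real.log (sortedEigs A i) := by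
  have hspec : spectrum ℝ A ⊆ Set.Ioi 0 := by
    rw [hA.1.spectrum_real_eq_range_eigenvalues]
    exact Set.range_subset_iff.2 hA.eigenvalues_pos
  rw [matLog, hA.1.sortedEigs_matFun (Real.strictMonoOn_log.monotoneOn.mono hspec)]
  rfl

variable {Ω : Type*} [MeasurableSpace Ω] {P : Measure Ω} {X : Ω → Matrix (Fin m) (Fin m) ℝ}

theorem isHermitian_integral (hX : ∀ ω, (X ω).IsHermitian) : (∫ ω, X ω ∂P).IsHermitian := by
  have hXT : ∀ ω, (X ω)ᵀ = X ω := fun ω => by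
    simpa [conjTranspose_eq_transpose_of_trivial] using (hX ω).eq
  rw [IsHermitian, conjTranspose_eq_transpose_of_trivial]
  calc (∫ ω, X ω ∂P)ᵀ = ∫ ω, (X ω)ᵀ ∂P :=
        ((transposeLinearEquiv (Fin m) (Fin m) ℝ ℝ).toContinuousLinearEquiv.integral_comp_comm
          X).symm
    _ = ∫ ω, X ω ∂P := by simp_rw [hXT]

variable (hXi : Integrable (ε := Fin m → Fin m → ℝ) X P) (hX : ∀ ω, (X ω).IsHermitian)
include hXi hX

theorem integrable_sortedEigs (i : Fin m) : Integrable (fun ω => sortedEigs (X ω) i) P := by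
  have hT := toEuclideanCLE.toContinuousLinearMap.integrable_comp hXi
  simp_rw [fun ω => (hX ω).sortedEigs_eq_kyFanSum_sub i]
  exact (integrable_kyFanSum (by simp) hT).sub (integrable_kyFanSum (by simp) hT)

theorem sum_filter_sortedEigs_integral_le {k : ℕ} (hk : k ≤ m) :
    ∑ j ∈ univ.filter (fun j : Fin m => j.val < k), sortedEigs (∫ ω, X ω ∂P) j
      ≤ ∑ j ∈ univ.filter (fun j : Fin m => j.val < k), ∫ ω, sortedEigs (X ω) j ∂P := by
  have hcomm : toEuclideanCLE (∫ ω, X ω ∂P) = ∫ ω, toEuclideanCLE (X ω) ∂P :=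
    (toEuclideanCLE.integral_comp_comm X).symm
  rw [(isHermitian_integral hX).sum_filter_sortedEigs_eq_kyFanSum hk, hcomm,
    ← integral_finsetSum _ fun j _ => integrable_sortedEigs hXi hX j]
  simp_rw [(hX _).sum_filter_sortedEigs_eq_kyFanSum hk]
  exact kyFanSum_integral_le (by simpa using hk)
    (toEuclideanCLE.toContinuousLinearMap.integrable_comp hXi)

theorem sum_sortedEigs_integral :
    ∑ j, sortedEigs (∫ ω, X ω ∂P) j = ∑ j, ∫ ω, sortedEigs (X ω) j ∂P := by
  rw [(isHermitian_integral hX).sum_sortedEigs,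
    ← integral_finsetSum _ fun j _ => integrable_sortedEigs hXi hX j]
  simp_rw [(hX _).sum_sortedEigs]
  exact ((traceLinearMap _ ℝ ℝ).toContinuousLinearMap.integral_comp_comm hXi).symm

end Matrix

theorem log_majorization_exp_integral_log_general
    (n : ℕ) {Ω : Type*} [MeasurableSpace Ω] (P : Measure Ω)
    (φ : Ω → Matrix (Fin n) (Fin n) ℝ)
    (hpos : ∀ ω, (φ ω).PosDef)
    (hint : Integrable (ε := Fin n → Fin n → ℝ) (fun ω => matLog (φ ω)) P) :
    (∀ k : ℕ, k ≤ n →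
      ∏ i ∈ Finset.univ.filter (fun i : Fin n => i.val < k),
          sortedEigs (matExp (∫ ω, matLog (φ ω) ∂P)) i
        ≤ ∏ i ∈ Finset.univ.filter (fun i : Fin n => i.val < k),
            Real.exp (∫ ω, Real.log (sortedEigs (φ ω) i) ∂P)) ∧
    (∏ i : Fin n, sortedEigs (matExp (∫ ω, matLog (φ ω) ∂P)) i
      = ∏ i : Fin n, Real.exp (∫ ω, Real.log (sortedEigs (φ ω) i) ∂P)) := by
  have hH : ∀ ω, (matLog (φ ω)).IsHermitian := fun ω => Matrix.isHermitian_matFun _ _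
  simp only [(Matrix.isHermitian_integral hH).sortedEigs_matExp, Function.comp_apply,
    fun ω i => ((hpos ω).sortedEigs_matLog i).symm, ← Real.exp_sum]
  exact ⟨fun k hk => Real.exp_le_exp.2 (Matrix.sum_filter_sortedEigs_integral_le hint hH hk),
    congrArg Real.exp (Matrix.sum_sortedEigs_integral hint hH)⟩

/-- for a measurable `φ : Ω → P_n` with `ω ↦ log φ(ω)` Bochner integrable,
`λ(exp ∫ log φ dP) ≺_log exp ∫ log λ(φ(ω)) dP`: for every `k ≤ n`,
`∏_{i<k} λ_i(exp ∫ log φ dP) ≤ ∏_{i<k} exp(∫ log λ_i(φ(ω)) dP)`, with equality at `k = n`. -/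
theorem log_majorization_exp_integral_log
    (n : ℕ) {Ω : Type*} [MeasurableSpace Ω] (P : Measure Ω) [IsProbabilityMeasure P]
    (φ : Ω → Matrix (Fin n) (Fin n) ℝ)
    (hpos : ∀ ω, (φ ω).PosDef)
    (hint : Integrable (ε := Fin n → Fin n → ℝ) (fun ω => matLog (φ ω)) P) :
    (∀ k : ℕ, k ≤ n →
      ∏ i ∈ Finset.univ.filter (fun i : Fin n => i.val < k),
          sortedEigs (matExp (∫ ω, matLog (φ ω) ∂P)) i
        ≤ ∏ i ∈ Finset.univ.filter (fun i : Fin n => i.val < k),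
            Real.exp (∫ ω, Real.log (sortedEigs (φ ω) i) ∂P)) ∧
    (∏ i : Fin n, sortedEigs (matExp (∫ ω, matLog (φ ω) ∂P)) i
      = ∏ i : Fin n, Real.exp (∫ ω, Real.log (sortedEigs (φ ω) i) ∂P)) :=
  log_majorization_exp_integral_log_general n P φ hpos hint
end
end
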